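/- arXiv:2005.11538 — 3 statements merged into one kernel-verified Lean document; each statement's English description precedes it below -/
import Mathlib

section
/- Let B be a standard Brownian motion, μ, σ > 0, λ = 2μ/σ², and let f(t) := E[exp(λ sup_{0≤s≤t}(−μs + σB_s))]. Then for every t > 0, f'(t) ≤ 2μ²/σ² + 3μ/(σ√t). -/
/-!
With `s = σ²t`, `c = μt` and `λ = 2c/s`, completing the square turns the integrand into the
Gaussian `exp (-(z - c)² / (2s))` times `(z - c)(z + 2c)/s - 1 + 2c²/s`. The first part is the
exact derivative of `-(z + 2c) exp (-(z - c)² / (2s))`, so its integral over `(0, ∞)` is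
`2c exp (-c²/(2s)) ≤ 2c`; the second part is at most `2c²/s` times the full Gaussian integral
`√(2πs)`. Dividing by `√(2πs) t` gives `2μ/√(2πσ²t) + 2μ²/σ²`, and `2π ≥ 1`.
-/

open MeasureTheory Filter Topology Real Set

section Gaussian

variable {b : ℝ}

theorem integrable_sq_mul_exp_neg_mul_sq (hb : 0 < b) :
    Integrable fun x : ℝ => x ^ 2 * exp (-b * x ^ 2) := by
  simpa only [rpow_two] using integrable_rpow_mul_exp_neg_mul_sq hb (s := 2) (by norm_num)

theorem tendsto_add_const_mul_exp_neg_mul_sq_atTop (hb : 0 < b) (a : ℝ) :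
    Tendsto (fun x : ℝ => (x + a) * exp (-b * x ^ 2)) atTop (𝓝 0) := by
  have h₁ := (tendsto_rpow_abs_mul_exp_neg_mul_sq_cocompact hb 1).mono_left atTop_le_cocompact
  have h₀ := (tendsto_rpow_abs_mul_exp_neg_mul_sq_cocompact hb 0).mono_left atTop_le_cocompact
  have := h₁.add (h₀.const_mul a)
  rw [mul_zero, add_zero] at this
  refine this.congr' ?_
  filter_upwards [eventually_ge_atTop 0] with x hx
  rw [abs_of_nonneg hx]
  simp only [rpow_one, rpow_zero]
  ring

variable (c : ℝ)

theorem integral_exp_neg_mul_sub_sq :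
    ∫ z : ℝ, exp (-b * (z - c) ^ 2) = √(π / b) :=
  (integral_sub_right_eq_self (fun y : ℝ => exp (-b * y ^ 2)) c).trans (integral_gaussian b)

theorem hasDerivAt_neg_add_mul_exp_neg_mul_sub_sq (z : ℝ) :
    HasDerivAt (fun z => -((z + 2 * c) * exp (-b * (z - c) ^ 2)))
      (exp (-b * (z - c) ^ 2) * (2 * b * (z - c) * (z + 2 * c) - 1)) z := by
  have hexp : HasDerivAt (fun z => exp (-b * (z - c) ^ 2))
      (exp (-b * (z - c) ^ 2) * (-b * (2 * (z - c)))) z := by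
    simpa using ((((hasDerivAt_id z).sub_const c).pow 2).const_mul (-b)).exp
  refine (((hasDerivAt_id z).add_const (2 * c)).mul hexp).neg.congr_deriv ?_
  simp only [id_eq]
  ring

theorem integrable_exp_neg_mul_sub_sq_mul (hb : 0 < b) :
    Integrable fun z => exp (-b * (z - c) ^ 2) * (2 * b * (z - c) * (z + 2 * c) - 1) := by
  have h := (((integrable_sq_mul_exp_neg_mul_sq hb).const_mul (2 * b)).add
    ((integrable_mul_exp_neg_mul_sq hb).const_mul (6 * b * c))).sub (integrable_exp_neg_mul_sq hb)
  refine (h.comp_sub_right c).congr (Eventually.of_forall fun z => ?_)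
  simp only [Pi.add_apply, Pi.sub_apply]
  ring

theorem integral_Ioi_exp_neg_mul_sub_sq_mul (hb : 0 < b) :
    ∫ z in Ioi 0, exp (-b * (z - c) ^ 2) * (2 * b * (z - c) * (z + 2 * c) - 1) =
      2 * c * exp (-b * c ^ 2) := by
  have hlim : Tendsto (fun z => -((z + 2 * c) * exp (-b * (z - c) ^ 2))) atTop (𝓝 0) := by
    have := ((tendsto_add_const_mul_exp_neg_mul_sq_atTop hb (3 * c)).comp
      (tendsto_atTop_add_const_right atTop (-c) tendsto_id)).neg
    rw [neg_zero] at this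
    refine this.congr fun z => ?_
    simp only [Function.comp_apply, id_eq]
    ring_nf
  rw [integral_Ioi_of_hasDerivAt_of_tendsto'
    (fun z _ => hasDerivAt_neg_add_mul_exp_neg_mul_sub_sq c z)
    (integrable_exp_neg_mul_sub_sq_mul c hb).integrableOn hlim]
  ring_nf

end Gaussian

theorem integral_Ioi_exp_sub_sq_mul_le {lam s c : ℝ} (hs : 0 < s) (hc : 0 ≤ c)
    (hlam : lam = 2 * c / s) :
    ∫ z in Ioi 0, exp (lam * z - (z + c) ^ 2 / (2 * s)) * ((z + c) * z / s - 1) ≤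
      2 * c + √(2 * π * s) * (2 * c ^ 2 / s) := by
  set b := (2 * s)⁻¹ with hb_def
  have hb : 0 < b := by positivity
  have hsplit : ∀ z, exp (lam * z - (z + c) ^ 2 / (2 * s)) * ((z + c) * z / s - 1) =
      exp (-b * (z - c) ^ 2) * (2 * b * (z - c) * (z + 2 * c) - 1) +
        exp (-b * (z - c) ^ 2) * (2 * c ^ 2 / s) := by
    intro z
    have hexp : lam * z - (z + c) ^ 2 / (2 * s) = -b * (z - c) ^ 2 := by
      rw [hb_def, hlam]
      field_simp
      ring
    rw [hexp, ← mul_add, hb_def]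
    congr 1
    field_simp
    ring
  have hgauss := (integrable_exp_neg_mul_sq hb).comp_sub_right c
  rw [setIntegral_congr_fun measurableSet_Ioi fun z _ => hsplit z,
    integral_add (integrable_exp_neg_mul_sub_sq_mul c hb).integrableOn
      (hgauss.mul_const _).integrableOn,
    integral_Ioi_exp_neg_mul_sub_sq_mul c hb]
  gcongr ?_ + ?_
  · refine mul_le_of_le_one_right (by positivity) (exp_le_one_iff.mpr ?_)
    exact mul_nonpos_of_nonpos_of_nonneg (neg_nonpos.mpr hb.le) (sq_nonneg c)
  · calc ∫ z in Ioi 0, exp (-b * (z - c) ^ 2) * (2 * c ^ 2 / s)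
        ≤ ∫ z, exp (-b * (z - c) ^ 2) * (2 * c ^ 2 / s) :=
          setIntegral_le_integral (hgauss.mul_const _) (Eventually.of_forall fun z => by positivity)
      _ = √(2 * π * s) * (2 * c ^ 2 / s) := by
          rw [integral_mul_const, integral_exp_neg_mul_sub_sq, hb_def, div_inv_eq_mul]
          ring_nf

theorem stmt3_general (μ σ lam : ℝ) (hμ : 0 < μ) (hσ : 0 < σ) (hlam : lam = 2 * μ / σ ^ 2)
    (d : ℝ → ℝ)
    (hrep : ∀ t, 0 < t → d t = (Real.sqrt (2 * Real.pi * σ ^ 2 * t ^ 3))⁻¹ *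
      ∫ z in Set.Ioi (0 : ℝ),
        Real.exp (lam * z - (z + μ * t) ^ 2 / (2 * σ ^ 2 * t)) *
          ((z + μ * t) * z / (σ ^ 2 * t) - 1)) :
    ∀ t, 0 < t → d t ≤ 2 * μ ^ 2 / σ ^ 2 + 3 * μ / (σ * Real.sqrt t) := by
  intro t ht
  have hs : 0 < σ ^ 2 * t := by positivity
  have hI := integral_Ioi_exp_sub_sq_mul_le hs (mul_pos hμ ht).le (lam := lam)
    (by rw [hlam]; field_simp)
  have hroot : √(2 * π * σ ^ 2 * t ^ 3) = √(2 * π * (σ ^ 2 * t)) * t := by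
    rw [show 2 * π * σ ^ 2 * t ^ 3 = 2 * π * (σ ^ 2 * t) * t ^ 2 by ring,
      sqrt_mul (by positivity), sqrt_sq ht.le]
  have hσt : σ * √t ≤ √(2 * π * (σ ^ 2 * t)) :=
    calc σ * √t = √(σ ^ 2 * t) := by rw [sqrt_mul (sq_nonneg σ), sqrt_sq hσ.le]
      _ ≤ _ := sqrt_le_sqrt (le_mul_of_one_le_left hs.le (by linarith [pi_gt_three]))
  rw [hrep t ht, hroot, show 2 * σ ^ 2 * t = 2 * (σ ^ 2 * t) by ring]
  calc (√(2 * π * (σ ^ 2 * t)) * t)⁻¹ * _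
      ≤ (√(2 * π * (σ ^ 2 * t)) * t)⁻¹ *
          (2 * (μ * t) + √(2 * π * (σ ^ 2 * t)) * (2 * (μ * t) ^ 2 / (σ ^ 2 * t))) := by
        gcongr
    _ = 2 * μ ^ 2 / σ ^ 2 + 2 * μ / √(2 * π * (σ ^ 2 * t)) := by
        field_simp
        ring
    _ ≤ 2 * μ ^ 2 / σ ^ 2 + 3 * μ / (σ * √t) := by
        gcongr 2 * μ ^ 2 / σ ^ 2 + ?_
        exact div_le_div₀ (by positivity) (by linarith) (by positivity) hσt

theorem stmt3 (μ σ lam : ℝ) (hμ : 0 < μ) (hσ : 0 < σ) (hlam : lam = 2 * μ / σ ^ 2)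
    (f d : ℝ → ℝ)
    (hderiv : ∀ t, 0 < t → HasDerivAt f (d t) t)
    (hrep : ∀ t, 0 < t → d t = (Real.sqrt (2 * Real.pi * σ ^ 2 * t ^ 3))⁻¹ *
      ∫ z in Set.Ioi (0 : ℝ),
        Real.exp (lam * z - (z + μ * t) ^ 2 / (2 * σ ^ 2 * t)) *
          ((z + μ * t) * z / (σ ^ 2 * t) - 1)) :
    ∀ t, 0 < t → d t ≤ 2 * μ ^ 2 / σ ^ 2 + 3 * μ / (σ * Real.sqrt t) :=
  stmt3_general μ σ lam hμ hσ hlam d hrep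
end

section
/- Let a: (0,∞) → [α,∞) be right-continuous and nonincreasing, and let t ↦ (Z⁰_t, R_t) be continuous paths with Z⁰ real-valued starting at z ≥ α and R positive. Define D_t := sup_{0≤s≤t}[Z⁰_s − a(R_s)]^+ (with D_{0−}=0) and Z_t := Z⁰_t − D_t. Then: (i) D is right-continuous and nondecreasing; (ii) Z_t ≤ a(R_t) for all t ≥ 0; (iii) Z_{t−} − ΔD_t = min{Z_{t−}, a(R_t)} at every jump time t of D, where ΔD_t := D_t − D_{t−}. -/
/-!
`D` is the running supremum of `f = (Z⁰ - a ∘ R)⁺`. Since `a` is nonincreasing and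
right-continuous it is lower semicontinuous, so `f` is upper semicontinuous. A running supremum
of a nonnegative upper semicontinuous function is nondecreasing and right-continuous, and it can
only jump at `t` to the value `f t`; at such a time `f t > 0`, so `D t = Z⁰ t - a (R t)`, which is
exactly the reflection identity.
-/

open Set Filter Topology

theorem AntitoneOn.lowerSemicontinuousAt {α β : Type*} [TopologicalSpace α] [LinearOrder α]
    [TopologicalSpace β] [LinearOrder β] [OrderClosedTopology β] {a : α → β} {s : Set α} {x : α}
    (ha : AntitoneOn a s) (hs : s ∈ 𝓝 x) (hx : ContinuousWithinAt a (Ioi x) x) :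
    LowerSemicontinuousAt a x := by
  intro y hy
  rw [← nhdsLE_sup_nhdsGT, eventually_sup]
  refine ⟨?_, hx (Ioi_mem_nhds hy)⟩
  filter_upwards [self_mem_nhdsWithin, mem_nhdsWithin_of_mem_nhds hs] with x' hx'x hx's
  exact hy.trans_le (ha hx's (mem_of_mem_nhds hs) hx'x)

/-- Since `sSup ∅ = 0`, this is `0` for `t < 0`. -/
noncomputable def runningSup (f : ℝ → ℝ) (t : ℝ) : ℝ :=
  sSup (f '' Icc 0 t)

section runningSup

variable {f : ℝ → ℝ} {s t c : ℝ}

theorem le_runningSup (hf : UpperSemicontinuous f) (hs : 0 ≤ s) (hst : s ≤ t) :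
    f s ≤ runningSup f t :=
  le_csSup ((hf.upperSemicontinuousOn _).bddAbove_of_isCompact isCompact_Icc) ⟨s, ⟨hs, hst⟩, rfl⟩

theorem runningSup_le (ht : 0 ≤ t) (h : ∀ s ∈ Icc 0 t, f s ≤ c) : runningSup f t ≤ c :=
  csSup_le ((nonempty_Icc.2 ht).image f) (forall_mem_image.2 h)

theorem runningSup_nonneg (hf₀ : ∀ s, 0 ≤ f s) (t : ℝ) : 0 ≤ runningSup f t :=
  Real.sSup_nonneg (forall_mem_image.2 fun s _ => hf₀ s)

theorem runningSup_zero : runningSup f 0 = f 0 := by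
  rw [runningSup, Icc_self, image_singleton, csSup_singleton]

theorem monotone_runningSup (hf : UpperSemicontinuous f) (hf₀ : ∀ s, 0 ≤ f s) :
    Monotone (runningSup f) := by
  intro s t hst
  rcases lt_or_ge s 0 with hs | hs
  · rw [runningSup, Icc_eq_empty (not_le.2 hs), image_empty, Real.sSup_empty]
    exact runningSup_nonneg hf₀ t
  · exact runningSup_le hs fun r hr => le_runningSup hf hr.1 (hr.2.trans hst)

theorem continuousWithinAt_runningSup_Ici (hf : UpperSemicontinuous f) (hf₀ : ∀ s, 0 ≤ f s)
    (ht : 0 ≤ t) : ContinuousWithinAt (runningSup f) (Ici t) t := by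
  refine tendsto_order.2 ⟨fun b hb => ?_, fun b hb => ?_⟩
  · filter_upwards [self_mem_nhdsWithin] with u hu
    exact hb.trans_le (monotone_runningSup hf hf₀ hu)
  obtain ⟨c, hDc, hcb⟩ := exists_between hb
  -- upper semicontinuity at `t` keeps `f < c` on some `[t, u₀)`; before `t`, `f ≤ D t < c`
  obtain ⟨u₀, hu₀, hsmall⟩ := mem_nhdsGE_iff_exists_Ico_subset.1
    (nhdsWithin_le_nhds (hf t c ((le_runningSup hf ht le_rfl).trans_lt hDc)))
  filter_upwards [Ico_mem_nhdsGE hu₀] with u hu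
  refine (runningSup_le (ht.trans hu.1) fun s hs => ?_).trans_lt hcb
  rcases le_or_gt s t with hst | hts
  · exact ((le_runningSup hf hs.1 hst).trans_lt hDc).le
  · exact (hsmall ⟨hts.le, hs.2.trans_lt hu.2⟩).le

theorem runningSup_eq_of_leftLim_lt (hf : UpperSemicontinuous f) (hf₀ : ∀ s, 0 ≤ f s)
    (ht : 0 < t) (hjump : Function.leftLim (runningSup f) t < runningSup f t) :
    runningSup f t = f t := by
  have hmono := monotone_runningSup hf hf₀
  have hle : runningSup f t ≤ max (Function.leftLim (runningSup f) t) (f t) := by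
    refine runningSup_le ht.le fun s hs => ?_
    rcases hs.2.lt_or_eq with hst | rfl
    · exact le_max_of_le_left ((le_runningSup hf hs.1 le_rfl).trans (hmono.le_leftLim hst))
    · exact le_max_right _ _
  refine le_antisymm ?_ (le_runningSup hf ht.le le_rfl)
  exact (le_max_iff.1 hle).resolve_left hjump.not_ge

theorem runningSup_posPart_eq_of_leftLim_lt {g : ℝ → ℝ}
    (hg : UpperSemicontinuous fun s => max (g s) 0) (ht : 0 < t)
    (hjump : Function.leftLim (runningSup fun s => max (g s) 0) t
      < runningSup (fun s => max (g s) 0) t) :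
    runningSup (fun s => max (g s) 0) t = g t := by
  have hf₀ : ∀ s, 0 ≤ max (g s) 0 := fun s => le_max_right _ _
  have hpos : 0 < runningSup (fun s => max (g s) 0) t :=
    ((runningSup_nonneg hf₀ 0).trans ((monotone_runningSup hg hf₀).le_leftLim ht)).trans_lt hjump
  rw [runningSup_eq_of_leftLim_lt hg hf₀ ht hjump] at hpos ⊢
  exact max_eq_left ((lt_max_iff.1 hpos).resolve_right (lt_irrefl 0)).le

end runningSup

theorem upperSemicontinuous_posPart_sub_comp {Z₀ a R : ℝ → ℝ} (hZ₀ : Continuous Z₀)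
    (ha : AntitoneOn a (Ioi 0)) (ha_rc : ∀ r, 0 < r → ContinuousWithinAt a (Ioi r) r)
    (hR : Continuous R) (hR_pos : ∀ t, 0 < R t) :
    UpperSemicontinuous fun s => max (Z₀ s - a (R s)) 0 := by
  have haR : LowerSemicontinuous (a ∘ R) := fun t =>
    (ha.lowerSemicontinuousAt (Ioi_mem_nhds (hR_pos t)) (ha_rc _ (hR_pos t))).comp
      hR.continuousAt
  convert (hZ₀.upperSemicontinuous.add (continuous_neg.comp_lowerSemicontinuous_antitone haR
      fun _ _ => neg_le_neg)).sup
    (continuous_const : Continuous fun _ : ℝ => (0 : ℝ)).upperSemicontinuous using 1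
  · rfl
  · ext s
    simp only [Function.comp_apply, sub_eq_add_neg]

theorem sub_max_sub_zero {G : Type*} [AddCommGroup G] [LinearOrder G] [IsOrderedAddMonoid G]
    (x y : G) : x - max (x - y) 0 = min x y := by
  rcases le_total x y with h | h
  · rw [max_eq_right (sub_nonpos.2 h), min_eq_left h, sub_zero]
  · rw [max_eq_left (sub_nonneg.2 h), min_eq_right h, sub_sub_cancel]


theorem stmt10_general (z : ℝ) (a : ℝ → ℝ)
    (ha_anti : AntitoneOn a (Set.Ioi 0))
    (ha_rc : ∀ r, 0 < r → Filter.Tendsto a (nhdsWithin r (Set.Ioi r)) (nhds (a r)))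
    (Z0 R : ℝ → ℝ) (hZ0 : Continuous Z0) (hZ00 : Z0 0 = z)
    (hR : Continuous R) (hRpos : ∀ t, 0 < R t)
    (D Z : ℝ → ℝ)
    (hD : ∀ t, D t = sSup ((fun s => max (Z0 s - a (R s)) 0) '' Set.Icc 0 t))
    (hZ : ∀ t, Z t = Z0 t - D t) :
    MonotoneOn D (Set.Ici 0) ∧
    (∀ t, 0 ≤ t → Filter.Tendsto D (nhdsWithin t (Set.Ici t)) (nhds (D t))) ∧
    (∀ t, 0 ≤ t → Z t ≤ a (R t)) ∧
    (∀ t, 0 < t → Function.leftLim D t ≠ D t →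
      Z0 t - Function.leftLim D t - (D t - Function.leftLim D t)
        = min (Z0 t - Function.leftLim D t) (a (R t))) ∧
    (z - D 0 = min z (a (R 0))) := by
  obtain rfl : D = runningSup fun s => max (Z0 s - a (R s)) 0 := funext hD
  have hf := upperSemicontinuous_posPart_sub_comp hZ0 ha_anti ha_rc hR hRpos
  have hf₀ : ∀ s, 0 ≤ max (Z0 s - a (R s)) 0 := fun s => le_max_right _ _
  have hmono := monotone_runningSup hf hf₀
  refine ⟨hmono.monotoneOn _, fun t ht => continuousWithinAt_runningSup_Ici hf hf₀ ht,
    fun t ht => ?_, fun t ht hjump => ?_, ?_⟩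
  · rw [hZ]
    linarith [le_runningSup hf ht le_rfl, le_max_left (Z0 t - a (R t)) 0]
  · have hL := hmono.leftLim_le (le_refl t)
    have hDt := runningSup_posPart_eq_of_leftLim_lt hf ht (hL.lt_of_ne hjump)
    rw [min_eq_right (by linarith)]
    linarith
  · rw [runningSup_zero, hZ00, sub_max_sub_zero]

theorem stmt10 (α z : ℝ) (hz : α ≤ z) (a : ℝ → ℝ)
    (ha_ge : ∀ r, 0 < r → α ≤ a r)
    (ha_anti : AntitoneOn a (Set.Ioi 0))
    (ha_rc : ∀ r, 0 < r → Filter.Tendsto a (nhdsWithin r (Set.Ioi r)) (nhds (a r)))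
    (Z0 R : ℝ → ℝ) (hZ0 : Continuous Z0) (hZ00 : Z0 0 = z)
    (hR : Continuous R) (hRpos : ∀ t, 0 < R t)
    (D Z : ℝ → ℝ)
    (hD : ∀ t, D t = sSup ((fun s => max (Z0 s - a (R s)) 0) '' Set.Icc 0 t))
    (hZ : ∀ t, Z t = Z0 t - D t) :
    MonotoneOn D (Set.Ici 0) ∧
    (∀ t, 0 ≤ t → Filter.Tendsto D (nhdsWithin t (Set.Ici t)) (nhds (D t))) ∧
    (∀ t, 0 ≤ t → Z t ≤ a (R t)) ∧
    (∀ t, 0 < t → Function.leftLim D t ≠ D t →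
      Z0 t - Function.leftLim D t - (D t - Function.leftLim D t)
        = min (Z0 t - Function.leftLim D t) (a (R t))) ∧
    (z - D 0 = min z (a (R 0))) :=
  stmt10_general z a ha_anti ha_rc Z0 R hZ0 hZ00 hR hRpos D Z hD hZ
end

section
/- Let α ∈ ℝ, λ > 0, and let U: [0,∞) × [α,∞) → ℝ be defined by U(r,z) = sup_τ E[exp(λ((z−α)∨S_τ − (z−α)) − ∫₀^τ ρ(R^r_s)ds)], where the supremum is over stopping times, S is the running supremum of a drifted Brownian motion independent of the process R^r, and ρ is nonnegative and nondecreasing. Then for each fixed r, the map z ↦ U(r,z) is convex and nonincreasing on [α,∞), and for each fixed z the map r ↦ U(r,z) is nonincreasing. -/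
open MeasureTheory Set

/-! For each stopping time and each sample path, the integrand is `exp` of a convex, nonincreasing
function of `z` (the gain `(z - α) ∨ s - (z - α) = 0 ∨ (s - (z - α))` is a hinge function), and it
is nonincreasing in `r` because the discount `I τ r ω` grows with `r`. Integration preserves these
properties and so does a supremum over stopping times, which is finite by assumption. -/

theorem ConvexOn.ciSup {E ι : Type*} [AddCommMonoid E] [Module ℝ E] [Nonempty ι] {s : Set E}
    {f : ι → E → ℝ} (hf : ∀ i, ConvexOn ℝ s (f i))
    (hbdd : ∀ x ∈ s, BddAbove (range fun i => f i x)) :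
    ConvexOn ℝ s fun x => ⨆ i, f i x :=
  ⟨(hf (Classical.arbitrary ι)).1, fun x hx y hy _ _ ha hb hab => ciSup_le fun i =>
    ((hf i).2 hx hy ha hb hab).trans <| add_le_add
      (smul_le_smul_of_nonneg_left (le_ciSup (hbdd x hx) i) ha)
      (smul_le_smul_of_nonneg_left (le_ciSup (hbdd y hy) i) hb)⟩

theorem convexOn_integral {Ω E : Type*} [MeasurableSpace Ω] {μ : Measure Ω} [AddCommMonoid E]
    [Module ℝ E] {s : Set E} {f : E → Ω → ℝ} (hs : Convex ℝ s) (hf : ∀ ω, ConvexOn ℝ s (f · ω))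
    (hint : ∀ x ∈ s, Integrable (f x) μ) : ConvexOn ℝ s fun x => ∫ ω, f x ω ∂μ := by
  refine ⟨hs, fun x hx y hy a b ha hb hab => ?_⟩
  calc ∫ ω, f (a • x + b • y) ω ∂μ
      ≤ ∫ ω, a * f x ω + b * f y ω ∂μ :=
        integral_mono (hint _ (hs hx hy ha hb hab))
          (((hint x hx).const_mul a).add ((hint y hy).const_mul b))
          fun ω => (hf ω).2 hx hy ha hb hab
    _ = a • ∫ ω, f x ω ∂μ + b • ∫ ω, f y ω ∂μ := by
        rw [integral_add ((hint x hx).const_mul a) ((hint y hy).const_mul b),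
          integral_const_mul, integral_const_mul, smul_eq_mul, smul_eq_mul]

theorem max_sub_eq_max_zero_sub (x s : ℝ) : max x s - x = max 0 (s - x) := by
  rw [← max_sub_sub_right, sub_self]

theorem antitone_max_sub_self (s : ℝ) : Antitone fun x : ℝ => max x s - x := by
  intro x y hxy
  simp only [max_sub_eq_max_zero_sub]
  exact max_le_max le_rfl (by linarith)

theorem convexOn_max_sub_self (s : ℝ) : ConvexOn ℝ univ fun x : ℝ => max x s - x := by
  simp only [max_sub_eq_max_zero_sub]
  exact (convexOn_const 0 convex_univ).sup
    ((convexOn_const s convex_univ).sub (concaveOn_id convex_univ))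

theorem ConvexOn.exp {E : Type*} [AddCommMonoid E] [Module ℝ E] {s : Set E} {g : E → ℝ}
    (hg : ConvexOn ℝ s g) : ConvexOn ℝ s fun x => Real.exp (g x) :=
  ⟨hg.1, fun _ hx _ hy _ _ ha hb hab => (Real.exp_le_exp.2 (hg.2 hx hy ha hb hab)).trans
    (convexOn_exp.2 (mem_univ _) (mem_univ _) ha hb hab)⟩

theorem convexOn_exp_mul_max_sub_self {lam : ℝ} (hlam : 0 ≤ lam) (α s d : ℝ) :
    ConvexOn ℝ univ fun z : ℝ => Real.exp (lam * (max (z - α) s - (z - α)) - d) :=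
  ((((convexOn_max_sub_self s).comp_affineMap
    (AffineMap.id ℝ ℝ - AffineMap.const ℝ ℝ α)).smul hlam).add_const (-d)).exp

theorem stmt12_general {Ω : Type*} [MeasurableSpace Ω] (P : Measure Ω)
    {ι : Type*} [Nonempty ι]
    (α lam : ℝ) (hlam : 0 < lam)
    (S : ι → Ω → ℝ)
    (I : ι → ℝ → Ω → ℝ)
    (hImono : ∀ τ ω, MonotoneOn (fun r => I τ r ω) (Set.Ici 0))
    (U : ℝ → ℝ → ℝ)
    (hU : ∀ r z, U r z =
      ⨆ τ : ι, ∫ ω, Real.exp (lam * (max (z - α) (S τ ω) - (z - α)) - I τ r ω) ∂P)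
    (hint : ∀ τ r z,
      Integrable (fun ω => Real.exp (lam * (max (z - α) (S τ ω) - (z - α)) - I τ r ω)) P)
    (hbdd : ∀ r z, BddAbove (Set.range fun τ : ι =>
      ∫ ω, Real.exp (lam * (max (z - α) (S τ ω) - (z - α)) - I τ r ω) ∂P)) :
    (∀ r, ConvexOn ℝ (Set.Ici α) (U r)) ∧
    (∀ r, AntitoneOn (U r) (Set.Ici α)) ∧
    (∀ z, AntitoneOn (fun r => U r z) (Set.Ici 0)) := by
  refine ⟨fun r => ?_, fun r z₁ _ z₂ _ hz => ?_, fun z r₁ hr₁ r₂ hr₂ hr => ?_⟩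
  · have hconv : ∀ τ, ConvexOn ℝ (Ici α) fun z =>
        ∫ ω, Real.exp (lam * (max (z - α) (S τ ω) - (z - α)) - I τ r ω) ∂P := fun τ =>
      convexOn_integral (convex_Ici α)
        (fun ω => (convexOn_exp_mul_max_sub_self hlam.le α (S τ ω) (I τ r ω)).subset
          (subset_univ _) (convex_Ici α))
        fun z _ => hint τ r z
    rw [funext (hU r)]
    exact ConvexOn.ciSup hconv fun z _ => hbdd r z
  · rw [hU, hU]
    exact ciSup_mono (hbdd r z₁) fun τ => integral_mono (hint τ r z₂) (hint τ r z₁) fun ω =>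
      Real.exp_le_exp.2 <| sub_le_sub_right (mul_le_mul_of_nonneg_left
        (antitone_max_sub_self (S τ ω) (sub_le_sub_right hz α)) hlam.le) _
  · simp only [hU]
    exact ciSup_mono (hbdd r₁ z) fun τ => integral_mono (hint τ r₂ z) (hint τ r₁ z) fun ω =>
      Real.exp_le_exp.2 <| sub_le_sub_left (hImono τ ω hr₁ hr₂ hr) _

theorem stmt12 {Ω : Type*} [MeasurableSpace Ω] (P : Measure Ω) [IsProbabilityMeasure P]
    {ι : Type*} [Nonempty ι]
    (α lam : ℝ) (hlam : 0 < lam)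
    (S : ι → Ω → ℝ) (hS : ∀ τ ω, 0 ≤ S τ ω)
    (I : ι → ℝ → Ω → ℝ) (hI0 : ∀ τ r ω, 0 ≤ I τ r ω)
    (hImono : ∀ τ ω, MonotoneOn (fun r => I τ r ω) (Set.Ici 0))
    (U : ℝ → ℝ → ℝ)
    (hU : ∀ r z, U r z =
      ⨆ τ : ι, ∫ ω, Real.exp (lam * (max (z - α) (S τ ω) - (z - α)) - I τ r ω) ∂P)
    (hint : ∀ τ r z,
      Integrable (fun ω => Real.exp (lam * (max (z - α) (S τ ω) - (z - α)) - I τ r ω)) P)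
    (hbdd : ∀ r z, BddAbove (Set.range fun τ : ι =>
      ∫ ω, Real.exp (lam * (max (z - α) (S τ ω) - (z - α)) - I τ r ω) ∂P)) :
    (∀ r, ConvexOn ℝ (Set.Ici α) (U r)) ∧
    (∀ r, AntitoneOn (U r) (Set.Ici α)) ∧
    (∀ z, AntitoneOn (fun r => U r z) (Set.Ici 0)) :=
  stmt12_general P α lam hlam S I hImono U hU hint hbdd
end
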